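/- Let f be a cubic surface of rank exactly 4. Then the set of singular points of f in P^3(ℂ) is either empty, consists of exactly one point, or is infinite; in particular, f cannot have a finite number k ≥ 2 of singular points. -/

import Mathlib

open MvPolynomial

/-- The linear form with coefficient vector `v`. -/
noncomputable def linForm {n : ℕ} (v : Fin n → ℂ) : MvPolynomial (Fin n) ℂ :=
  ∑ i, C (v i) * X i

/-- `f` can be written as a sum of `r` `d`-th powers of linear forms. -/
def hasDecomp {n : ℕ} (d : ℕ) (f : MvPolynomial (Fin n) ℂ) (r : ℕ) : Prop :=
  ∃ v : Fin r → Fin n → ℂ, f = ∑ j, (linForm (v j)) ^ d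

/-- `f` has rank exactly `r` with respect to `d`-th powers of linear forms. -/
def hasRank {n : ℕ} (d : ℕ) (f : MvPolynomial (Fin n) ℂ) (r : ℕ) : Prop :=
  hasDecomp d f r ∧ ∀ s, s < r → ¬ hasDecomp d f s

lemma eval_linForm {n : ℕ} (w p : Fin n → ℂ) :
    eval p (linForm w) = ∑ i, w i * p i := by
  simp [linForm]

lemma eval_pderiv_cube {n : ℕ} (w p : Fin n → ℂ) (i : Fin n) :
    eval p (pderiv i (linForm w ^ 3)) = 3 * ((∑ k, w k * p k) ^ 2 * w i) := by
  classical
  have h1 : pderiv i (linForm w) = C (w i) := by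
    simp only [linForm, map_sum, pderiv_C_mul, pderiv_X]
    rw [Finset.sum_eq_single i]
    · simp
    · intro b _ hb; simp [Pi.single_eq_of_ne hb]
    · simp
  rw [pderiv_pow, h1]
  simp [eval_linForm]
  ring

lemma eval_pderiv_decomp {n r : ℕ} (v : Fin r → Fin n → ℂ) (p : Fin n → ℂ) (i : Fin n) :
    eval p (pderiv i (∑ j, linForm (v j) ^ 3)) = 3 * ∑ j, (∑ k, v j k * p k) ^ 2 * v j i := by
  rw [map_sum, map_sum, Finset.mul_sum]
  exact Finset.sum_congr rfl fun j _ => by rw [eval_pderiv_cube]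

/-- the singularity condition as a polynomial-free statement -/
def gv {n r : ℕ} (v : Fin r → Fin n → ℂ) (p : Fin n → ℂ) : Prop :=
  ∀ i, ∑ j, (∑ k, v j k * p k) ^ 2 * v j i = 0

lemma lf_add_smul {n : ℕ} (w p q : Fin n → ℂ) (t : ℂ) :
    ∑ k, w k * (p + t • q) k = (∑ k, w k * p k) + t * ∑ k, w k * q k := by
  simp [mul_add, Finset.sum_add_distrib, Finset.mul_sum, mul_left_comm]

lemma lf_smul {n : ℕ} (w p : Fin n → ℂ) (t : ℂ) :
    ∑ k, w k * (t • p) k = t * ∑ k, w k * p k := by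
  simp [Finset.mul_sum, mul_left_comm]

lemma gv_smul {n r : ℕ} (v : Fin r → Fin n → ℂ) (t : ℂ) (p : Fin n → ℂ)
    (h : gv v p) : gv v (t • p) := by
  intro i
  have : ∀ j : Fin r, (∑ k, v j k * (t • p) k) ^ 2 * v j i
      = t ^ 2 * ((∑ k, v j k * p k) ^ 2 * v j i) := fun j => by rw [lf_smul]; ring
  rw [Finset.sum_congr rfl fun j _ => this j, ← Finset.mul_sum, h i, mul_zero]

lemma sing_iff_gv {n r : ℕ} (v : Fin r → Fin n → ℂ) (f : MvPolynomial (Fin n) ℂ)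
    (hf : f = ∑ j, linForm (v j) ^ 3) (p : Fin n → ℂ) :
    (∀ i, eval p (pderiv i f) = 0) ↔ gv v p := by
  subst hf
  constructor
  · intro h i
    have := h i
    rw [eval_pderiv_decomp] at this
    rcases mul_eq_zero.mp this with h3 | h0
    · norm_num at h3
    · exact h0
  · intro h i
    rw [eval_pderiv_decomp, h i, mul_zero]

lemma mem_iff_gv {n r : ℕ} (v : Fin r → Fin n → ℂ) (f : MvPolynomial (Fin n) ℂ)
    (hf : f = ∑ j, linForm (v j) ^ 3) (p : Fin n → ℂ) (hp : p ≠ 0) :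
    (∀ i, eval (Projectivization.mk ℂ p hp).rep (pderiv i f) = 0) ↔ gv v p := by
  obtain ⟨a, ha⟩ : ∃ a : ℂˣ, a • p = (Projectivization.mk ℂ p hp).rep :=
    (Projectivization.mk_eq_mk_iff ℂ _ _ (Projectivization.rep_nonzero _) hp).mp
      (Projectivization.mk_rep _)
  rw [sing_iff_gv v f hf]
  have ha' : (a : ℂ) • p = (Projectivization.mk ℂ p hp).rep := by
    rw [← Units.smul_def]; exact ha
  constructor
  · intro h
    have h2 := gv_smul v ((a⁻¹ : ℂˣ) : ℂ) _ h
    rwa [← ha', smul_smul, Units.inv_mul, one_smul] at h2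
  · intro h
    rw [← ha']
    exact gv_smul v _ _ h

theorem stmt7 (f : MvPolynomial (Fin 4) ℂ) (hhom : f.IsHomogeneous 3)
    (hrank : hasRank 3 f 4) :
    {x : Projectivization ℂ (Fin 4 → ℂ) | ∀ i, eval x.rep (pderiv i f) = 0} = ∅ ∨
    (∃! x : Projectivization ℂ (Fin 4 → ℂ), ∀ i, eval x.rep (pderiv i f) = 0) ∨
    {x : Projectivization ℂ (Fin 4 → ℂ) | ∀ i, eval x.rep (pderiv i f) = 0}.Infinite := by
  classical
  obtain ⟨⟨v, hf⟩, -⟩ := hrank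
  set M : Matrix (Fin 4) (Fin 4) ℂ := Matrix.of v with hM
  by_cases hker : ∃ z : Fin 4 → ℂ, z ≠ 0 ∧ ∀ j, ∑ k, v j k * z k = 0
  · obtain ⟨z, hz0, hzker⟩ := hker
    by_cases hsing : ∃ p : Fin 4 → ℂ, gv v p ∧ ∃ j, ∑ k, v j k * p k ≠ 0
    · -- infinite: translate a "non-cone" singular point along the kernel direction
      right; right
      obtain ⟨p, hgp, j0, hj0⟩ := hsing
      have hlf : ∀ t : ℂ, ∀ j, ∑ k, v j k * (p + t • z) k = ∑ k, v j k * p k := by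
        intro t j; rw [lf_add_smul, hzker j, mul_zero, add_zero]
      have hpt : ∀ t : ℂ, p + t • z ≠ 0 := by
        intro t h
        apply hj0
        have := hlf t j0
        rw [h] at this
        simpa using this.symm
      refine Set.infinite_of_injective_forall_mem
        (f := fun t : ℂ => Projectivization.mk ℂ (p + t • z) (hpt t)) ?_ ?_
      · intro s t h
        rw [Projectivization.mk_eq_mk_iff] at h
        obtain ⟨a, ha⟩ := h
        rw [Units.smul_def] at ha
        have h1 : (a : ℂ) * ∑ k, v j0 k * p k = ∑ k, v j0 k * p k := by
          have e := congrArg (fun q : Fin 4 → ℂ => ∑ k, v j0 k * q k) ha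
          rw [lf_smul, hlf t j0, hlf s j0] at e
          exact e
        have ha1 : (a : ℂ) = 1 := by
          have := sub_eq_zero.mpr h1
          rw [← sub_one_mul] at this
          rcases mul_eq_zero.mp this with h | h
          · exact sub_eq_zero.mp h
          · exact absurd h hj0
        rw [ha1, one_smul] at ha
        have h3 : t • z = s • z := add_left_cancel ha
        have h4 : (t - s) • z = 0 := by rw [sub_smul, h3, sub_self]
        rcases smul_eq_zero.mp h4 with h | h
        · exact (sub_eq_zero.mp h).symm
        · exact absurd h hz0
      · intro t
        exact (mem_iff_gv v f hf _ (hpt t)).mpr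
          (fun i => by
            rw [Finset.sum_congr rfl fun j _ => by rw [hlf t j]]
            exact hgp i)
    · -- all singular points lie in the kernel cone
      have hcone : ∀ p : Fin 4 → ℂ, gv v p → ∀ j, ∑ k, v j k * p k = 0 := by
        intro p hp
        by_contra hc
        push_neg at hc
        exact hsing ⟨p, hp, hc⟩
      by_cases hspan : ∀ w : Fin 4 → ℂ, (∀ j, ∑ k, v j k * w k = 0) → ∃ c : ℂ, w = c • z
      · -- unique singular point
        right; left
        have hgz : gv v z := fun i => by
          rw [Finset.sum_congr rfl fun j _ => by rw [hzker j]]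
          simp
        refine ⟨Projectivization.mk ℂ z hz0, (mem_iff_gv v f hf z hz0).mpr hgz, ?_⟩
        intro x hx
        have hgx : gv v x.rep := (sing_iff_gv v f hf _).mp hx
        obtain ⟨c, hc⟩ := hspan x.rep (hcone _ hgx)
        conv_lhs => rw [← Projectivization.mk_rep x]
        rw [Projectivization.mk_eq_mk_iff']
        exact ⟨c, hc.symm⟩
      · -- kernel is at least 2-dimensional : infinitely many singular points
        right; right
        push_neg at hspan
        obtain ⟨w, hwker, hnc⟩ := hspan
        have hwne : w ≠ 0 := fun h => hnc 0 (by simp [h])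
        have hpt : ∀ t : ℂ, z + t • w ≠ 0 := by
          intro t h
          have hz' : z = (-t) • w := by
            rw [neg_smul]
            exact eq_neg_of_add_eq_zero_left h
          by_cases ht : t = 0
          · exact hz0 (by simp [hz', ht])
          · exact hnc ((-t)⁻¹)
              (by rw [hz', smul_smul, inv_mul_cancel₀ (neg_ne_zero.mpr ht), one_smul])
        have hlf : ∀ t : ℂ, ∀ j, ∑ k, v j k * (z + t • w) k = 0 := by
          intro t j; rw [lf_add_smul, hzker j, hwker j, mul_zero, add_zero]
        refine Set.infinite_of_injective_forall_mem
          (f := fun t : ℂ => Projectivization.mk ℂ (z + t • w) (hpt t)) ?_ ?_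
        · intro s t h
          rw [Projectivization.mk_eq_mk_iff] at h
          obtain ⟨a, ha⟩ := h
          rw [Units.smul_def, smul_add, smul_smul] at ha
          have key : ((a : ℂ) - 1) • z = (s - (a : ℂ) * t) • w := by
            calc ((a : ℂ) - 1) • z = (a : ℂ) • z - z := by rw [sub_smul, one_smul]
              _ = ((a : ℂ) • z + ((a : ℂ) * t) • w) - (z + ((a : ℂ) * t) • w) := by abel
              _ = (z + s • w) - (z + ((a : ℂ) * t) • w) := by rw [ha]
              _ = (s - (a : ℂ) * t) • w := by rw [sub_smul]; abel
          by_cases ha1 : (a : ℂ) = 1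
          · rw [ha1, sub_self, zero_smul] at key
            have h5 := (smul_eq_zero.mp key.symm).resolve_right hwne
            rw [one_mul] at h5
            exact sub_eq_zero.mp h5
          · exfalso
            have hz' : z = (((a : ℂ) - 1)⁻¹ * (s - (a : ℂ) * t)) • w := by
              rw [mul_smul, ← key, smul_smul, inv_mul_cancel₀ (sub_ne_zero.mpr ha1), one_smul]
            have hc0 : ((a : ℂ) - 1)⁻¹ * (s - (a : ℂ) * t) ≠ 0 :=
              fun h => hz0 (by rw [hz', h, zero_smul])
            exact hnc (((a : ℂ) - 1)⁻¹ * (s - (a : ℂ) * t))⁻¹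
              (by rw [hz', smul_smul, inv_mul_cancel₀ hc0, one_smul])
        · intro t
          exact (mem_iff_gv v f hf _ (hpt t)).mpr
            (fun i => by
              rw [Finset.sum_congr rfl fun j _ => by rw [hlf t j]]
              simp)
  · -- trivial kernel : no singular points at all
    left
    rw [Set.eq_empty_iff_forall_notMem]
    intro x hx
    have hgx : gv v x.rep := (sing_iff_gv v f hf _).mp hx
    have hdet : M.det ≠ 0 := by
      intro h
      obtain ⟨z, hz0, hz⟩ := (Matrix.exists_mulVec_eq_zero_iff).mpr h
      exact hker ⟨z, hz0, fun j => by
        have := congrFun hz j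
        simpa [Matrix.mulVec, dotProduct, hM] using this⟩
    have hw : (fun j => (∑ k, v j k * x.rep k) ^ 2) = 0 := by
      by_contra hw0
      apply hdet
      rw [← Matrix.exists_vecMul_eq_zero_iff]
      refine ⟨_, hw0, funext fun i => ?_⟩
      simpa [Matrix.vecMul, dotProduct, hM] using hgx i
    have hlf0 : ∀ j, ∑ k, v j k * x.rep k = 0 := fun j =>
      pow_eq_zero_iff (by norm_num) |>.mp (congrFun hw j)
    exact hker ⟨x.rep, x.rep_nonzero, hlf0⟩
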